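/- Let D, H₀ ∈ ℝ³ with D ≠ 0. Define H⊥ = H₀ − ‖D‖⁻² • ⟨H₀, D⟩ • D and δ* = ‖D‖⁻² • (D × H⊥). Then H₀ + D × δ* = ‖D‖⁻² • ⟨H₀, D⟩ • D, and hence ‖H₀ + D × δ*‖ = |⟨H₀, D⟩| / ‖D‖. In particular the lower bound ‖H₀ + D × δ‖ ≥ |⟨H₀, D⟩|/‖D‖ (valid for all δ) is attained at δ = δ*. -/

import Mathlib

/-!
Every `D × δ` is orthogonal to `D`, so the component `⟪H₀, D⟫ / ‖D‖` of `H₀ + D × δ` along `D`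
cannot be changed, which by Cauchy–Schwarz gives the floor. Conversely, the vector triple product
gives `D × (D × v) = -‖D‖² v` for `v ⟂ D`, so `D × δ* = -H⊥` and `H₀ + D × δ*` is the projection
of `H₀` onto `D`, whose norm is the floor.
-/

open RealInnerProductSpace

/-- Cross product on `EuclideanSpace ℝ (Fin 3)`. -/
noncomputable def cross3 (a b : EuclideanSpace ℝ (Fin 3)) : EuclideanSpace ℝ (Fin 3) :=
  (WithLp.equiv 2 (Fin 3 → ℝ)).symm
    ![a 1 * b 2 - a 2 * b 1, a 2 * b 0 - a 0 * b 2, a 0 * b 1 - a 1 * b 0]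

section Projection

variable {E : Type*} [NormedAddCommGroup E] [InnerProductSpace ℝ E]

lemma inner_sub_inv_norm_sq_smul_inner_smul (x y : E) :
    ⟪y, x - (‖y‖ ^ 2)⁻¹ • ⟪x, y⟫ • y⟫ = 0 := by
  rcases eq_or_ne y 0 with rfl | hy
  · simp
  have : ‖y‖ ≠ 0 := norm_ne_zero_iff.mpr hy
  rw [inner_sub_right, inner_smul_right, inner_smul_right, real_inner_self_eq_norm_sq,
    real_inner_comm]
  field_simp
  ring

lemma norm_inv_norm_sq_smul_inner_smul (x y : E) :
    ‖(‖y‖ ^ 2)⁻¹ • ⟪x, y⟫ • y‖ = |⟪x, y⟫| / ‖y‖ := by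
  rcases eq_or_ne y 0 with rfl | hy
  · simp
  have : ‖y‖ ≠ 0 := norm_ne_zero_iff.mpr hy
  rw [norm_smul, norm_smul, norm_inv, norm_pow, norm_norm, Real.norm_eq_abs]
  field_simp

end Projection

section Cross

open Matrix WithLp

lemma cross3_eq_toLp_crossProduct (a b : EuclideanSpace ℝ (Fin 3)) :
    cross3 a b = toLp 2 (ofLp a ⨯₃ ofLp b) := by
  rw [cross_apply]
  rfl

lemma EuclideanSpace.real_inner_eq_dotProduct {ι : Type*} [Fintype ι] (x y : EuclideanSpace ℝ ι) :
    ⟪x, y⟫ = ofLp x ⬝ᵥ ofLp y := by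
  rw [EuclideanSpace.inner_eq_star_dotProduct, star_trivial, dotProduct_comm]

lemma inner_cross3_self (a b : EuclideanSpace ℝ (Fin 3)) : ⟪cross3 a b, a⟫ = 0 := by
  rw [real_inner_comm, EuclideanSpace.real_inner_eq_dotProduct, cross3_eq_toLp_crossProduct,
    ofLp_toLp, dot_self_cross]

lemma cross3_smul_right (a b : EuclideanSpace ℝ (Fin 3)) (r : ℝ) :
    cross3 a (r • b) = r • cross3 a b := by
  simp only [cross3_eq_toLp_crossProduct, ofLp_smul, map_smul, toLp_smul]

lemma cross3_cross3 (a b c : EuclideanSpace ℝ (Fin 3)) :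
    cross3 a (cross3 b c) = ⟪a, c⟫ • b - ⟪a, b⟫ • c := by
  simp only [cross3_eq_toLp_crossProduct, cross_cross_eq_smul_sub_smul',
    EuclideanSpace.real_inner_eq_dotProduct, dotProduct_comm (ofLp b), toLp_sub, toLp_smul,
    toLp_ofLp]

end Cross

lemma cross3_inv_norm_sq_smul_cross3_of_inner_eq_zero {a v : EuclideanSpace ℝ (Fin 3)}
    (ha : a ≠ 0) (hv : ⟪a, v⟫ = 0) : cross3 a ((‖a‖ ^ 2)⁻¹ • cross3 a v) = -v := by
  have : ‖a‖ ^ 2 ≠ 0 := by positivity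
  rw [cross3_smul_right, cross3_cross3, hv, real_inner_self_eq_norm_sq, zero_smul, zero_sub,
    smul_neg, smul_smul, inv_mul_cancel₀ this, one_smul]

lemma abs_inner_div_norm_le_norm_add_cross3 (H D δ : EuclideanSpace ℝ (Fin 3)) :
    |⟪H, D⟫| / ‖D‖ ≤ ‖H + cross3 D δ‖ := by
  have h : ⟪H + cross3 D δ, D⟫ = ⟪H, D⟫ := by
    rw [inner_add_left, inner_cross3_self, add_zero]
  refine div_le_of_le_mul₀ (norm_nonneg _) (norm_nonneg _) ?_
  rw [← h]
  exact abs_real_inner_le_norm _ _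

theorem stmt14 (D H₀ : EuclideanSpace ℝ (Fin 3)) (hD : D ≠ 0)
    (Hperp δstar : EuclideanSpace ℝ (Fin 3))
    (hHperp : Hperp = H₀ - (‖D‖ ^ 2)⁻¹ • ⟪H₀, D⟫ • D)
    (hδstar : δstar = (‖D‖ ^ 2)⁻¹ • cross3 D Hperp) :
    H₀ + cross3 D δstar = (‖D‖ ^ 2)⁻¹ • ⟪H₀, D⟫ • D ∧
    ‖H₀ + cross3 D δstar‖ = |⟪H₀, D⟫| / ‖D‖ ∧
    ∀ δ : EuclideanSpace ℝ (Fin 3), |⟪H₀, D⟫| / ‖D‖ ≤ ‖H₀ + cross3 D δ‖ := by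
  have hcancel : cross3 D δstar = -Hperp := by
    rw [hδstar, cross3_inv_norm_sq_smul_cross3_of_inner_eq_zero hD
      (hHperp ▸ inner_sub_inv_norm_sq_smul_inner_smul H₀ D)]
  have heq : H₀ + cross3 D δstar = (‖D‖ ^ 2)⁻¹ • ⟪H₀, D⟫ • D := by
    rw [hcancel, hHperp, neg_sub, add_sub_cancel]
  exact ⟨heq, heq ▸ norm_inv_norm_sq_smul_inner_smul H₀ D,
    abs_inner_div_norm_le_norm_add_cross3 H₀ D⟩
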